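/- In the setting of the approximate remote state preparation protocol: let ρ₀ be positive semidefinite on ℂ^D with support projector P, L = Σ_x √λ_x (|x⟩⟨x|)ᵀ + c(I−P)ᵀ from its spectral decomposition, |Ψ_m⟩ = N(I⊗L)|Ψ⟩ with N = √(D/Tr(L†L)), 0 < ε < 1, p_res = ε/(1+ε), and let ρ_V satisfy (1−ε)ρ₀ ≤ ρ_V ≤ (1+ε)ρ₀ with τ_res = ((1+ε)/ε)Pᵀ − (1/ε)(L^{-1})† ρ_Vᵀ L^{-1}. Then the conditional probability of a 'fake success' satisfies ⟨Ψ_m|(P ⊗ p_res τ_res)|Ψ_m⟩ / ⟨Ψ_m|(P ⊗ Pᵀ)|Ψ_m⟩ ≤ 2ε/(1+ε). -/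

import Mathlib

open Matrix MeasureTheory
open scoped Kronecker ComplexOrder

noncomputable section

/-- The positive semidefinite square root of a matrix (junk value `0` if not PSD). -/
def matSqrt {ι : Type*} [Fintype ι] [DecidableEq ι] (A : Matrix ι ι ℂ) : Matrix ι ι ℂ :=
  open Classical in if h : A.PosSemidef then
    (h.1.eigenvectorUnitary.1 * diagonal ((↑) ∘ (Real.sqrt ∘ h.1.eigenvalues)) *
      (star h.1.eigenvectorUnitary : Matrix ι ι ℂ)) else 0

/-- The matrix absolute value `|X| = √(XᴴX)`. -/
def matAbs {ι : Type*} [Fintype ι] [DecidableEq ι] (X : Matrix ι ι ℂ) : Matrix ι ι ℂ :=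
  matSqrt (Xᴴ * X)

/-- Uhlmann fidelity `F(ρ,σ) = (Tr|√ρ√σ|)²`. -/
def fid {ι : Type*} [Fintype ι] [DecidableEq ι] (ρ σ : Matrix ι ι ℂ) : ℝ :=
  ((matAbs (matSqrt ρ * matSqrt σ)).trace).re ^ 2

/-- A density matrix: positive semidefinite with unit trace. -/
def IsDensity {ι : Type*} [Fintype ι] [DecidableEq ι] (ρ : Matrix ι ι ℂ) : Prop :=
  ρ.PosSemidef ∧ ρ.trace = 1

/-- The rank-one projector `|ψ⟩⟨ψ|`. -/
def ketbra {ι : Type*} (ψ : ι → ℂ) : Matrix ι ι ℂ := Matrix.vecMulVec ψ (star ψ)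

/-- The `l`-fold tensor power of a matrix on `ℂ^d`, acting on `(ℂ^d)^{⊗l}`. -/
def tpow {d : ℕ} (M : Matrix (Fin d) (Fin d) ℂ) (l : ℕ) :
    Matrix (Fin l → Fin d) (Fin l → Fin d) ℂ :=
  Matrix.of fun f g => ∏ i, M (f i) (g i)

/-- Loewner order: `A ⪯ B` iff `B - A` is positive semidefinite. -/
def loewnerLE {ι : Type*} [Fintype ι] (A B : Matrix ι ι ℂ) : Prop := (B - A).PosSemidef

/-- Projector onto the symmetric subspace of `(ℂ^d)^{⊗l}`:
`(1/l!) Σ_{π ∈ S_l} U_π` where `U_π` permutes the tensor factors. -/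
def symProj (d l : ℕ) : Matrix (Fin l → Fin d) (Fin l → Fin d) ℂ :=
  (l.factorial : ℂ)⁻¹ •
    ∑ π : Equiv.Perm (Fin l), Matrix.of fun f g => if f = (fun i => g (π i)) then (1 : ℂ) else 0


/-- Partial trace over the second tensor factor. -/
def ptraceB {D : ℕ} (M : Matrix (Fin D × Fin D) (Fin D × Fin D) ℂ) :
    Matrix (Fin D) (Fin D) ℂ :=
  Matrix.of fun i j => ∑ k, M (i, k) (j, k)

/-- The maximally entangled vector `(1/√D) Σᵢ |i⟩⊗|i⟩` on `ℂ^D ⊗ ℂ^D`. -/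
def maxEnt (D : ℕ) : Fin D × Fin D → ℂ :=
  fun q => if q.1 = q.2 then ((Real.sqrt D : ℝ) : ℂ)⁻¹ else 0

/-!
Writing `Ψₘ = t · vec L` turns every expectation into a trace:
`⟨Ψₘ|A ⊗ B|Ψₘ⟩ = |t|² Tr(L† B L Aᵀ)`. In the conjugated eigenbasis `yₐ = x̄ₐ` the matrices
`Pᵀ` and `ρ₀ᵀ` are spectral sums and `L = √ρ₀ᵀ + c(1 - Pᵀ)`, so `L Pᵀ = Pᵀ L = √ρ₀ᵀ` and the
denominator is `|t|² Tr ρ₀`. In the numerator `L⁻¹` cancels against `L`, leaving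
`|t|² (Tr ρ₀ - Tr(ρ_Vᵀ Pᵀ) / (1 + ε))`, and compressing `(1 - ε) ρ₀ ≤ ρ_V` by `Pᵀ` gives
`Tr(ρ_Vᵀ Pᵀ) ≥ (1 - ε) Tr ρ₀`.
-/

section SpectralSum

variable {ι κ : Type*}

lemma transpose_ketbra (u : ι → ℂ) : (ketbra u)ᵀ = ketbra (star u) := by
  rw [ketbra, ketbra, transpose_vecMulVec, star_star]

lemma conjTranspose_ketbra (u : ι → ℂ) : (ketbra u)ᴴ = ketbra u := by
  rw [ketbra, conjTranspose_vecMulVec, star_star]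

lemma ketbra_mul_ketbra [Fintype ι] (u v : ι → ℂ) :
    ketbra u * ketbra v = (star u ⬝ᵥ v) • vecMulVec u (star v) := by
  rw [ketbra, ketbra, vecMulVec_mul_vecMulVec, vecMulVec_smul]

lemma trace_ketbra [Fintype ι] (u : ι → ℂ) : (ketbra u).trace = star u ⬝ᵥ u := by
  rw [ketbra, trace_vecMulVec, dotProduct_comm]

lemma star_dotProduct_star_of_orthonormal [Fintype ι] [DecidableEq κ] {x : κ → ι → ℂ}
    (hx : ∀ a b, star (x a) ⬝ᵥ x b = if a = b then 1 else 0) (a b : κ) :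
    star (star (x a)) ⬝ᵥ star (x b) = if a = b then 1 else 0 := by
  rw [star_star, dotProduct_comm, hx]
  simp [eq_comm]

variable [Fintype κ]

def spectralSum (x : κ → ι → ℂ) (f : κ → ℂ) : Matrix ι ι ℂ :=
  ∑ a, f a • ketbra (x a)

variable {x : κ → ι → ℂ}

lemma conjTranspose_spectralSum (f : κ → ℂ) :
    (spectralSum x f)ᴴ = spectralSum x (star f) := by
  simp only [spectralSum, conjTranspose_sum, conjTranspose_smul, conjTranspose_ketbra,
    Pi.star_apply]

lemma transpose_spectralSum (f : κ → ℂ) :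
    (spectralSum x f)ᵀ = spectralSum (fun a => star (x a)) f := by
  simp only [spectralSum, transpose_sum, transpose_smul, transpose_ketbra]

variable [Fintype ι] [DecidableEq κ]

lemma spectralSum_mul_spectralSum (hx : ∀ a b, star (x a) ⬝ᵥ x b = if a = b then 1 else 0)
    (f g : κ → ℂ) : spectralSum x f * spectralSum x g = spectralSum x (f * g) := by
  simp only [spectralSum, Finset.sum_mul, Finset.mul_sum, smul_mul_smul, ketbra_mul_ketbra, hx,
    ite_smul, one_smul, zero_smul, smul_ite, smul_zero, Finset.sum_ite_eq', Finset.mem_univ,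
    if_true, Pi.mul_apply]
  rfl

lemma trace_spectralSum (hx : ∀ a b, star (x a) ⬝ᵥ x b = if a = b then 1 else 0)
    (f : κ → ℂ) : (spectralSum x f).trace = ∑ a, f a := by
  simp [spectralSum, trace_sum, trace_ketbra, hx]

lemma isStarProjection_spectralSum_one
    (hx : ∀ a b, star (x a) ⬝ᵥ x b = if a = b then 1 else 0) :
    IsStarProjection (spectralSum x 1) where
  isIdempotentElem := by rw [IsIdempotentElem, spectralSum_mul_spectralSum hx, one_mul]
  isSelfAdjoint := by rw [IsSelfAdjoint, star_eq_conjTranspose, conjTranspose_spectralSum, star_one]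

lemma spectralSum_one_mul (hx : ∀ a b, star (x a) ⬝ᵥ x b = if a = b then 1 else 0)
    (f : κ → ℂ) : spectralSum x 1 * spectralSum x f = spectralSum x f := by
  rw [spectralSum_mul_spectralSum hx, one_mul]

lemma spectralSum_mul_one (hx : ∀ a b, star (x a) ⬝ᵥ x b = if a = b then 1 else 0)
    (f : κ → ℂ) : spectralSum x f * spectralSum x 1 = spectralSum x f := by
  rw [spectralSum_mul_spectralSum hx, mul_one]

end SpectralSum

section Projection

variable {𝕜 A : Type*} [Field 𝕜] [Ring A] [Algebra 𝕜 A] {p m : A}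

lemma mul_add_smul_one_sub (hp : IsIdempotentElem p) (hpm : p * m = m) (c : 𝕜) :
    p * (m + c • (1 - p)) = m := by
  rw [mul_add, mul_smul_comm, mul_sub, mul_one, hp.eq, sub_self, smul_zero, add_zero, hpm]

lemma add_smul_one_sub_mul (hp : IsIdempotentElem p) (hmp : m * p = m) (c : 𝕜) :
    (m + c • (1 - p)) * p = m := by
  rw [add_mul, smul_mul_assoc, sub_mul, one_mul, hp.eq, sub_self, smul_zero, add_zero, hmp]

lemma add_smul_one_sub_mul_add_inv_smul_one_sub (hp : IsIdempotentElem p) (hmp : m * p = m)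
    {m' : A} (hpm' : p * m' = m') (hmm' : m * m' = p) {c : 𝕜} (hc : c ≠ 0) :
    (m + c • (1 - p)) * (m' + c⁻¹ • (1 - p)) = 1 := by
  have hm : m * (1 - p) = 0 := by rw [mul_sub, mul_one, hmp, sub_self]
  have hm' : (1 - p) * m' = 0 := by rw [sub_mul, one_mul, hpm', sub_self]
  simp only [add_mul, mul_add, mul_smul_comm, smul_mul_assoc, hm, hm', hmm', hp.one_sub.eq,
    smul_smul, inv_mul_cancel₀ hc, smul_zero, one_smul, add_zero, zero_add, add_sub_cancel]

lemma star_add_smul_one_sub_mul_mul_mul [StarRing A] (hp : IsStarProjection p)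
    (hm : IsSelfAdjoint m) (hpm : p * m = m) (hmp : m * p = m) (c : 𝕜) :
    star (m + c • (1 - p)) * p * (m + c • (1 - p)) * p = m * m := by
  have hstar : star (m + c • (1 - p)) * p = m := by
    simpa only [star_mul, hp.isSelfAdjoint.star_eq, hm.star_eq] using
      congrArg star (mul_add_smul_one_sub hp.isIdempotentElem hpm c)
  rw [hstar, mul_assoc, add_smul_one_sub_mul hp.isIdempotentElem hmp]

end Projection

section ExtendedSqrt

variable {ι κ : Type*} [Fintype ι] [DecidableEq ι] [Fintype κ] [DecidableEq κ]
  {y : κ → ι → ℂ}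

def extendedSqrt (y : κ → ι → ℂ) (lam : κ → ℝ) (c : ℂ) : Matrix ι ι ℂ :=
  spectralSum y (fun a => ((Real.sqrt (lam a) : ℝ) : ℂ)) + c • (1 - spectralSum y 1)

lemma isUnit_det_extendedSqrt (hy : ∀ a b, star (y a) ⬝ᵥ y b = if a = b then 1 else 0)
    {lam : κ → ℝ} (hlam : ∀ a, 0 < lam a) {c : ℂ} (hc : c ≠ 0) :
    IsUnit (extendedSqrt y lam c).det := by
  refine isUnit_det_of_right_inverse (B := spectralSum y (fun a => ((Real.sqrt (lam a))⁻¹ : ℂ)) +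
    c⁻¹ • (1 - spectralSum y 1)) ?_
  refine add_smul_one_sub_mul_add_inv_smul_one_sub
    (isStarProjection_spectralSum_one hy).isIdempotentElem (spectralSum_mul_one hy _)
    (spectralSum_one_mul hy _) ?_ hc
  rw [spectralSum_mul_spectralSum hy]
  congr 1
  ext a
  have : Real.sqrt (lam a) ≠ 0 := (Real.sqrt_pos.mpr (hlam a)).ne'
  simp [this]

lemma conjTranspose_extendedSqrt_mul_mul_mul
    (hy : ∀ a b, star (y a) ⬝ᵥ y b = if a = b then 1 else 0) {lam : κ → ℝ}
    (hlam : ∀ a, 0 ≤ lam a) (c : ℂ) :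
    (extendedSqrt y lam c)ᴴ * spectralSum y 1 * extendedSqrt y lam c * spectralSum y 1 =
      spectralSum y (fun a => (lam a : ℂ)) := by
  have hm : IsSelfAdjoint (spectralSum y (fun a => ((Real.sqrt (lam a) : ℝ) : ℂ))) := by
    rw [IsSelfAdjoint, star_eq_conjTranspose, conjTranspose_spectralSum]
    congr 1
    ext a
    simp
  rw [← star_eq_conjTranspose, extendedSqrt,
    star_add_smul_one_sub_mul_mul_mul (isStarProjection_spectralSum_one hy) hm
      (spectralSum_one_mul hy _) (spectralSum_mul_one hy _),
    spectralSum_mul_spectralSum hy]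
  congr 1
  ext a
  simp [← Complex.ofReal_mul, Real.mul_self_sqrt (hlam a)]

end ExtendedSqrt

lemma conjTranspose_mul_conjTranspose_inv_mul_inv_mul {n R : Type*} [Fintype n] [DecidableEq n]
    [CommRing R] [StarRing R] {L : Matrix n n R} (hL : IsUnit L.det) (X : Matrix n n R) :
    Lᴴ * (L⁻¹ᴴ * X * L⁻¹) * L = X := by
  rw [Matrix.mul_assoc, Matrix.mul_assoc, Matrix.mul_assoc, nonsing_inv_mul L hL,
    Matrix.mul_one, ← Matrix.mul_assoc, ← conjTranspose_mul, nonsing_inv_mul L hL,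
    conjTranspose_one, Matrix.one_mul]

namespace loewnerLE

variable {n : Type*} [Fintype n] {A B : Matrix n n ℂ}

lemma transpose (h : loewnerLE A B) : loewnerLE Aᵀ Bᵀ := by
  rw [loewnerLE, ← transpose_sub]
  exact PosSemidef.transpose h

lemma re_trace_mul_le (h : loewnerLE A B) {p : Matrix n n ℂ}
    (hp : IsStarProjection p) : (A * p).trace.re ≤ (B * p).trace.re := by
  have hnonneg := (PosSemidef.mul_mul_conjTranspose_same h p).trace_nonneg
  rw [trace_mul_cycle, ← star_eq_conjTranspose, hp.isSelfAdjoint.star_eq,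
    hp.isIdempotentElem.eq, trace_mul_comm, Matrix.sub_mul, trace_sub] at hnonneg
  simpa using Complex.re_le_re hnonneg

end loewnerLE

lemma star_vec_dotProduct_kronecker_mulVec_vec {m n R : Type*} [Fintype m] [Fintype n]
    [CommSemiring R] [StarRing R] (A : Matrix n n R) (B : Matrix m m R) (Y : Matrix m n R) :
    star (vec Y) ⬝ᵥ (A ⊗ₖ B) *ᵥ vec Y = (Yᴴ * B * Y * Aᵀ).trace := by
  rw [kronecker_mulVec_vec, star_vec_dotProduct_vec, Matrix.mul_assoc, Matrix.mul_assoc,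
    Matrix.mul_assoc]

lemma maxEnt_eq_vec (D : ℕ) : maxEnt D = vec ((((Real.sqrt D : ℝ) : ℂ))⁻¹ • 1) := by
  ext ⟨i, j⟩
  simp [maxEnt, vec, one_apply, eq_comm]

lemma kronecker_one_mulVec_maxEnt {D : ℕ} (L : Matrix (Fin D) (Fin D) ℂ) :
    (1 ⊗ₖ L) *ᵥ maxEnt D = (((Real.sqrt D : ℝ) : ℂ))⁻¹ • vec L := by
  rw [maxEnt_eq_vec, ← vec_mul_eq_mulVec, Matrix.mul_smul, Matrix.mul_one, vec_smul]

lemma re_star_smul_dotProduct_mulVec_smul {n : Type*} [Fintype n] (t : ℂ) (v : n → ℂ)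
    (M : Matrix n n ℂ) :
    (star (t • v) ⬝ᵥ M *ᵥ (t • v)).re = Complex.normSq t * (star v ⬝ᵥ M *ᵥ v).re := by
  rw [star_smul, mulVec_smul, dotProduct_smul, smul_dotProduct, smul_smul, smul_eq_mul,
    Complex.star_def, Complex.mul_conj', ← Complex.ofReal_pow, Complex.re_ofReal_mul,
    Complex.sq_norm]

lemma scaled_fake_success_le {ε s T S : ℝ} (hε : 0 < ε) (hs : 0 ≤ s) (hT : 0 ≤ T)
    (hS : (1 - ε) * T ≤ S) :
    s * (ε / (1 + ε) * ((1 + ε) / ε * T - ε⁻¹ * S)) / (s * T) ≤ 2 * ε / (1 + ε) := by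
  have h : ε / (1 + ε) * ((1 + ε) / ε * T - ε⁻¹ * S) =
      2 * ε / (1 + ε) * T - (S - (1 - ε) * T) / (1 + ε) := by
    field_simp
    ring
  refine div_le_of_le_mul₀ (mul_nonneg hs hT) (by positivity) ?_
  calc s * (ε / (1 + ε) * ((1 + ε) / ε * T - ε⁻¹ * S))
      ≤ s * (2 * ε / (1 + ε) * T) := by
        rw [h]
        exact mul_le_mul_of_nonneg_left (sub_le_self _ (div_nonneg (sub_nonneg.mpr hS)
          (by positivity))) hs
    _ = 2 * ε / (1 + ε) * (s * T) := by ring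

theorem remote_preparation_fake_success_probability_general
    (D : ℕ)
    (κ : Type*) [Fintype κ] [DecidableEq κ]
    (x : κ → (Fin D → ℂ)) (hx : ∀ a b, star (x a) ⬝ᵥ x b = (if a = b then (1 : ℂ) else 0))
    (lam : κ → ℝ) (hlam : ∀ a, 0 < lam a)
    (ρ₀ : Matrix (Fin D) (Fin D) ℂ) (hρ₀ : ρ₀ = ∑ a, (lam a : ℂ) • ketbra (x a))
    (P : Matrix (Fin D) (Fin D) ℂ) (hP : P = ∑ a, ketbra (x a))
    (c : ℂ) (hc : c ≠ 0)
    (L : Matrix (Fin D) (Fin D) ℂ)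
    (hL : L = (∑ a, ((Real.sqrt (lam a) : ℝ) : ℂ) • (ketbra (x a))ᵀ) + c • (1 - P)ᵀ)
    (N : ℝ)
    (Ψm : Fin D × Fin D → ℂ)
    (hΨm : Ψm = (N : ℂ) • ((1 : Matrix (Fin D) (Fin D) ℂ) ⊗ₖ L).mulVec (maxEnt D))
    (ε : ℝ) (hε0 : 0 < ε)
    (ρV : Matrix (Fin D) (Fin D) ℂ)
    (hlo : loewnerLE (((1 - ε : ℝ) : ℂ) • ρ₀) ρV)
    (τres : Matrix (Fin D) (Fin D) ℂ)
    (hτ : τres = (((1 + ε) / ε : ℝ) : ℂ) • Pᵀ -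
      ((ε⁻¹ : ℝ) : ℂ) • ((L⁻¹)ᴴ * ρVᵀ * L⁻¹)) :
    (star Ψm ⬝ᵥ ((P ⊗ₖ (((ε / (1 + ε) : ℝ) : ℂ) • τres)).mulVec Ψm)).re
      / (star Ψm ⬝ᵥ ((P ⊗ₖ Pᵀ).mulVec Ψm)).re ≤ 2 * ε / (1 + ε) := by
  set y : κ → Fin D → ℂ := fun a => star (x a)
  have hy := star_dotProduct_star_of_orthonormal hx
  have hPt : Pᵀ = spectralSum y 1 := by
    rw [hP, ← transpose_spectralSum]
    simp [spectralSum]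
  have hρt : ρ₀ᵀ = spectralSum y (fun a => (lam a : ℂ)) := hρ₀ ▸ transpose_spectralSum _
  have hLy : L = extendedSqrt y lam c := by
    simp only [transpose_ketbra, transpose_sub, transpose_one, hPt] at hL
    exact hL
  have hden : Lᴴ * Pᵀ * L * Pᵀ = ρ₀ᵀ := by
    rw [hPt, hLy, hρt, conjTranspose_extendedSqrt_mul_mul_mul hy fun a => (hlam a).le]
  have hnum : Lᴴ * (((ε / (1 + ε) : ℝ) : ℂ) • τres) * L * Pᵀ = ((ε / (1 + ε) : ℝ) : ℂ) •
      ((((1 + ε) / ε : ℝ) : ℂ) • ρ₀ᵀ - ((ε⁻¹ : ℝ) : ℂ) • (ρVᵀ * Pᵀ)) := by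
    rw [hτ]
    simp only [Matrix.mul_smul, Matrix.smul_mul, Matrix.mul_sub, Matrix.sub_mul, hden,
      conjTranspose_mul_conjTranspose_inv_mul_inv_mul
        (hLy ▸ isUnit_det_extendedSqrt hy hlam hc)]
  have hS : (1 - ε) * (ρ₀ᵀ).trace.re ≤ (ρVᵀ * Pᵀ).trace.re := by
    have := hlo.transpose.re_trace_mul_le (hPt ▸ isStarProjection_spectralSum_one hy)
    have hρP : ρ₀ᵀ * Pᵀ = ρ₀ᵀ := by rw [hρt, hPt, spectralSum_mul_one hy]
    rwa [transpose_smul, Matrix.smul_mul, hρP, trace_smul, smul_eq_mul,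
      Complex.re_ofReal_mul] at this
  have hT : 0 ≤ (ρ₀ᵀ).trace.re := by
    rw [hρt, trace_spectralSum hy, Complex.re_sum]
    exact Finset.sum_nonneg fun a _ => (hlam a).le
  obtain ⟨t, rfl⟩ : ∃ t : ℂ, Ψm = t • vec L :=
    ⟨_, by rw [hΨm, kronecker_one_mulVec_maxEnt, smul_smul]⟩
  rw [re_star_smul_dotProduct_mulVec_smul, re_star_smul_dotProduct_mulVec_smul,
    star_vec_dotProduct_kronecker_mulVec_vec, star_vec_dotProduct_kronecker_mulVec_vec, hnum,
    hden]
  simp only [trace_smul, trace_sub, smul_eq_mul, Complex.re_ofReal_mul, Complex.sub_re]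
  exact scaled_fake_success_le hε0 (Complex.normSq_nonneg t) hT hS

/-- the conditional probability of a 'fake success' in the approximate
remote state preparation protocol is at most `2ε/(1+ε)`. -/
theorem remote_preparation_fake_success_probability
    (D : ℕ) (hD : 1 ≤ D)
    (κ : Type*) [Fintype κ] [DecidableEq κ]
    (x : κ → (Fin D → ℂ)) (hx : ∀ a b, star (x a) ⬝ᵥ x b = (if a = b then (1 : ℂ) else 0))
    (lam : κ → ℝ) (hlam : ∀ a, 0 < lam a)
    (ρ₀ : Matrix (Fin D) (Fin D) ℂ) (hρ₀ : ρ₀ = ∑ a, (lam a : ℂ) • ketbra (x a))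
    (P : Matrix (Fin D) (Fin D) ℂ) (hP : P = ∑ a, ketbra (x a))
    (c : ℂ) (hc : c ≠ 0)
    (L : Matrix (Fin D) (Fin D) ℂ)
    (hL : L = (∑ a, ((Real.sqrt (lam a) : ℝ) : ℂ) • (ketbra (x a))ᵀ) + c • (1 - P)ᵀ)
    (N : ℝ) (hN : N = Real.sqrt (D / ((Lᴴ * L).trace).re))
    (Ψm : Fin D × Fin D → ℂ)
    (hΨm : Ψm = (N : ℂ) • ((1 : Matrix (Fin D) (Fin D) ℂ) ⊗ₖ L).mulVec (maxEnt D))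
    (ε : ℝ) (hε0 : 0 < ε) (hε1 : ε < 1)
    (ρV : Matrix (Fin D) (Fin D) ℂ)
    (hlo : loewnerLE (((1 - ε : ℝ) : ℂ) • ρ₀) ρV)
    (hhi : loewnerLE ρV (((1 + ε : ℝ) : ℂ) • ρ₀))
    (τres : Matrix (Fin D) (Fin D) ℂ)
    (hτ : τres = (((1 + ε) / ε : ℝ) : ℂ) • Pᵀ -
      ((ε⁻¹ : ℝ) : ℂ) • ((L⁻¹)ᴴ * ρVᵀ * L⁻¹)) :
    (star Ψm ⬝ᵥ ((P ⊗ₖ (((ε / (1 + ε) : ℝ) : ℂ) • τres)).mulVec Ψm)).re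
      / (star Ψm ⬝ᵥ ((P ⊗ₖ Pᵀ).mulVec Ψm)).re ≤ 2 * ε / (1 + ε) :=
  remote_preparation_fake_success_probability_general D κ x hx lam hlam ρ₀ hρ₀ P hP c hc L hL N Ψm
    hΨm ε hε0 ρV hlo τres hτ
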